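/- arXiv:2203.03406 — 2 statements merged into one kernel-verified Lean document; each statement's English description precedes it below -/
import Mathlib

section
/- Let n and k be positive integers, and let u and v be distinct vertices of the Kneser graph K(2n+k,n) with s = |u ∩ v|. If dist(u,v) = diam(K(2n+k,n)), then (⌈(n-1)/(2k)⌉ - 1)·k + 1 ≤ s ≤ (⌈(n-1)/(2k)⌉ - 1)·k + 1 + H(n,k). -/
/-- The Kneser graph `K(m, n)`: vertices are the `n`-element subsets of an `m`-element
ground set, with edges between disjoint sets. -/
def KneserGraph (m n : ℕ) : SimpleGraph {s : Finset (Fin m) // s.card = n} where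
  Adj u v := Disjoint u.1 v.1 ∧ u ≠ v
  symm := ⟨fun u v ⟨h, hne⟩ => ⟨h.symm, hne.symm⟩⟩
  loopless := ⟨fun u ⟨_, h⟩ => h rfl⟩

/-- The geodetic interval `I[u,v]`: all vertices lying on some shortest `u,v`-path. -/
def geodInterval {V : Type*} (G : SimpleGraph V) (u v : V) : Set V :=
  {w | G.dist u w + G.dist w v = G.dist u v}

/-- `I[W] = ⋃_{u,v ∈ W} I[u,v]`. -/
def geodIntervalSet {V : Type*} (G : SimpleGraph V) (W : Set V) : Set V :=
  ⋃ (u ∈ W) (v ∈ W), geodInterval G u v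

/-- `W` is a geodetic set if `I[W] = V(G)`. -/
def IsGeodeticSet {V : Type*} (G : SimpleGraph V) (W : Set V) : Prop :=
  geodIntervalSet G W = Set.univ

/-- `W` is geodetically convex if `I[W] = W`. -/
def IsGConvex {V : Type*} (G : SimpleGraph V) (W : Set V) : Prop :=
  geodIntervalSet G W = W

/-- The geodetic hull `H[W]`: the smallest g-convex set containing `W`. -/
def geodHull {V : Type*} (G : SimpleGraph V) (W : Set V) : Set V :=
  ⋂₀ {C | IsGConvex G C ∧ W ⊆ C}

/-- `W` is a geodetic hull set if `H[W] = V(G)`. -/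
def IsGeodHullSet {V : Type*} (G : SimpleGraph V) (W : Set V) : Prop :=
  geodHull G W = Set.univ

/-- The geodetic number: minimum cardinality of a geodetic set. -/
noncomputable def geodeticNumber {V : Type*} (G : SimpleGraph V) : ℕ :=
  sInf {m | ∃ W : Set V, IsGeodeticSet G W ∧ W.ncard = m}

/-- The geodetic hull number: minimum cardinality of a geodetic hull set. -/
noncomputable def geodHullNumber {V : Type*} (G : SimpleGraph V) : ℕ :=
  sInf {m | ∃ W : Set V, IsGeodHullSet G W ∧ W.ncard = m}

/-- The function `H(n,k)` from the paper. -/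
def Hfun (n k : ℕ) : ℕ := if n % k ≤ 1 then n % k + k - 2 else n % k - 2

/-- `p = (⌈(n-1)/(2k)⌉ - 1)·k + 1`, computed in `ℤ`. -/
def pInt (n k : ℕ) : ℤ := (⌈((n : ℚ) - 1) / (2 * k)⌉ - 1) * k + 1

/-!
In `K(2n+k,n)` a walk of even length `2t` from `u` to `v` forces `n ≤ |u ∩ v| + tk`, one of odd
length `2t+1` forces `|u ∩ v| ≤ tk`, and walks moving `min(k, n - |u ∩ v|)` elements per double
step attain both bounds; so the distance is a function of `s = |u ∩ v|` alone. With
`r = ⌈(n-1)/k⌉`, a pair with `s = n - 1 - ⌊r/2⌋k` is at distance at least `r + 1`, hence so is a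
diametral pair, which forces `(⌈r/2⌉ - 1)k < s < n - ⌊r/2⌋k`. Since `⌈r/2⌉ = ⌈(n-1)/(2k)⌉` and
`H(n,k) = (n + k - 2) mod k`, these are the two claimed bounds.
-/

open Finset

theorem Nat.ceilDiv_ceilDiv (a : ℕ) {b c : ℕ} (hb : 0 < b) (hc : 0 < c) :
    a ⌈/⌉ b ⌈/⌉ c = a ⌈/⌉ (b * c) :=
  eq_of_forall_ge_iff fun x => by
    rw [ceilDiv_le_iff_le_mul hc, ceilDiv_le_iff_le_mul hb, ceilDiv_le_iff_le_mul (by positivity),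
      mul_assoc]

theorem Int.ceil_natCast_div_natCast_eq_ceilDiv {K : Type*} [Field K] [LinearOrder K]
    [IsStrictOrderedRing K] [FloorRing K] (a : ℕ) {d : ℕ} (hd : 0 < d) :
    ⌈(a / d : K)⌉ = (a ⌈/⌉ d : ℕ) := by
  have hdK : (0 : K) < d := by exact_mod_cast hd
  have hle : a ≤ d * (a ⌈/⌉ d) := (ceilDiv_le_iff_le_mul hd).1 le_rfl
  rw [Int.ceil_eq_iff, lt_div_iff₀ hdK, div_le_iff₀ hdK]
  push_cast
  refine ⟨?_, by rw [mul_comm]; exact_mod_cast hle⟩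
  rcases Nat.eq_zero_or_pos (a ⌈/⌉ d) with h0 | hpos
  · rw [h0]; push_cast; linarith [(Nat.cast_nonneg a : (0 : K) ≤ a)]
  · have hlt : d * (a ⌈/⌉ d - 1) < a := by
      by_contra! hge
      have := (ceilDiv_le_iff_le_mul hd).2 hge
      omega
    have : ((d * (a ⌈/⌉ d - 1) : ℕ) : K) < a := by exact_mod_cast hlt
    push_cast [Nat.cast_sub hpos] at this
    linarith

theorem Hfun_eq_mod (n k : ℕ) : Hfun n k = (n + k - 2) % k := by
  rcases Nat.eq_zero_or_pos k with rfl | hk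
  · simp only [Hfun, Nat.mod_zero]; split_ifs <;> omega
  unfold Hfun
  have hdiv := Nat.div_add_mod n k
  have hmod := Nat.mod_lt n hk
  set q := n / k
  set m := n % k
  split_ifs with h
  · rcases Nat.lt_or_ge k 2 with hk1 | hk2
    · obtain rfl : k = 1 := by omega
      rw [Nat.mod_one]; omega
    · rw [show n + k - 2 = (m + k - 2) + k * q by omega, Nat.add_mul_mod_self_left,
        Nat.mod_eq_of_lt (by omega)]
  · rw [show n + k - 2 = (m - 2) + k * (q + 1) by rw [Nat.mul_succ]; omega,
      Nat.add_mul_mod_self_left, Nat.mod_eq_of_lt (by omega)]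

theorem Hfun_add_mul_ceilDiv {n k : ℕ} (hn : 0 < n) :
    Hfun n k + k * ((n - 1) ⌈/⌉ k) = n + k - 2 := by
  rw [Hfun_eq_mod, Nat.ceilDiv_eq_add_pred_div, show n - 1 + k - 1 = n + k - 2 by omega,
    Nat.mod_add_div]

theorem pInt_eq_ceilDiv {n k : ℕ} (hn : 0 < n) (hk : 0 < k) :
    pInt n k = (((n - 1) ⌈/⌉ k ⌈/⌉ 2 : ℕ) - 1) * k + 1 := by
  rw [pInt, Nat.ceilDiv_ceilDiv _ hk two_pos, mul_comm k,
    ← Int.ceil_natCast_div_natCast_eq_ceilDiv (K := ℚ) _ (by positivity)]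
  push_cast [Nat.cast_sub hn]
  rfl

theorem Finset.card_inter_add_card_inter_le_of_disjoint {α : Type*} [DecidableEq α]
    {x w : Finset α} (h : Disjoint x w) (y : Finset α) : #(x ∩ y) + #(w ∩ y) ≤ #y := by
  rw [← card_union_of_disjoint (h.mono inter_subset_left inter_subset_left)]
  exact card_le_card (union_subset inter_subset_right inter_subset_right)

theorem Finset.card_le_card_inter_add_card_inter_add_card_compl {α : Type*} [DecidableEq α]
    [Fintype α] (x w y : Finset α) : #y ≤ #(x ∩ y) + #(w ∩ y) + #(x ∪ w)ᶜ := by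
  calc #y ≤ #((x ∩ y) ∪ (w ∩ y) ∪ (x ∪ w)ᶜ) := card_le_card fun a ha => by
        simp only [mem_union, mem_inter, mem_compl]; tauto
    _ ≤ _ := (card_union_le _ _).trans (by gcongr; exact card_union_le _ _)

namespace KneserGraph

open SimpleGraph

variable {n k : ℕ}

abbrev Vertex (n k : ℕ) := {s : Finset (Fin (2 * n + k)) // #s = n}

instance : Nonempty (Vertex n k) :=
  let ⟨s, _, hs⟩ := exists_subset_card_eq (s := (univ : Finset (Fin (2 * n + k))))
    (by rw [card_univ, Fintype.card_fin]; omega)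
  ⟨⟨s, hs⟩⟩

theorem adj_of_disjoint (hn : 0 < n) {u v : Vertex n k} (h : Disjoint u.1 v.1) :
    (KneserGraph (2 * n + k) n).Adj u v := by
  refine ⟨h, ?_⟩
  rintro rfl
  have := u.2
  simp only [disjoint_self.1 h, bot_eq_empty, card_empty] at this
  omega

theorem eq_of_le_card_inter {u v : Vertex n k} (h : n ≤ #(u.1 ∩ v.1)) : u = v := by
  have huv : u.1 ∩ v.1 = u.1 := eq_of_subset_of_card_le inter_subset_left (by rw [u.2]; exact h)
  exact Subtype.ext (eq_of_subset_of_card_le (inter_eq_left.1 huv) (by rw [u.2, v.2]))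

theorem card_compl (u : Vertex n k) : #u.1ᶜ = n + k := by
  rw [Finset.card_compl, u.2, Fintype.card_fin]; omega

theorem card_compl_union_of_adj {x w : Vertex n k} (h : (KneserGraph (2 * n + k) n).Adj x w) :
    #(x.1 ∪ w.1)ᶜ = k := by
  rw [Finset.card_compl, card_union_of_disjoint h.1, x.2, w.2, Fintype.card_fin]; omega

theorem exists_vertex_between {A C : Finset (Fin (2 * n + k))} (hAC : A ⊆ C) (hA : #A ≤ n)
    (hC : n ≤ #C) : ∃ w : Vertex n k, A ⊆ w.1 ∧ w.1 ⊆ C :=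
  let ⟨w, hAw, hwC, hw⟩ := exists_subsuperset_card_eq hAC hA hC
  ⟨⟨w, hw⟩, hAw, hwC⟩

theorem exists_card_inter_eq (u : Vertex n k) {t : ℕ} (ht : t ≤ n) :
    ∃ v : Vertex n k, #(u.1 ∩ v.1) = t := by
  obtain ⟨B, hBu, hB⟩ := exists_subset_card_eq (show t ≤ #u.1 by rw [u.2]; exact ht)
  obtain ⟨v, hBv, hv⟩ := exists_vertex_between (subset_union_left : B ⊆ B ∪ u.1ᶜ) (hB.trans_le ht)
    ((card_compl u ▸ (by omega : n ≤ n + k)).trans (card_le_card subset_union_right))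
  refine ⟨v, hB ▸ congrArg card (Subset.antisymm (fun a ha => ?_) (subset_inter hBu hBv))⟩
  rw [mem_inter] at ha
  simpa [ha.1] using hv ha.2

theorem exists_adj_adj_of_card_union_le (hn : 0 < n) {u u' : Vertex n k}
    (h : #(u.1 ∪ u'.1) ≤ n + k) :
    ∃ w, (KneserGraph (2 * n + k) n).Adj u w ∧ (KneserGraph (2 * n + k) n).Adj w u' := by
  obtain ⟨w, -, hw⟩ := exists_vertex_between (empty_subset (u.1 ∪ u'.1)ᶜ) (by simp)
    (by rw [Finset.card_compl, Fintype.card_fin]; omega)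
  have hdisj : Disjoint (u.1 ∪ u'.1) w.1 := disjoint_compl_right.mono_right hw
  exact ⟨w, adj_of_disjoint hn (hdisj.mono_left subset_union_left),
    adj_of_disjoint hn (hdisj.mono_left subset_union_right).symm⟩

/-- Trade `min k (n - |u ∩ v|)` elements of `u \ v` for elements of `v \ u`. -/
theorem exists_card_union_le_and_le_card_inter (u v : Vertex n k) :
    ∃ u' : Vertex n k, #(u.1 ∪ u'.1) ≤ n + k ∧ min n (#(u.1 ∩ v.1) + k) ≤ #(u'.1 ∩ v.1) := by
  set s := #(u.1 ∩ v.1)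
  have hs : s ≤ n := u.2 ▸ card_le_card inter_subset_left
  obtain ⟨B, hB, hBcard⟩ := exists_subset_card_eq
    (show min k (n - s) ≤ #(v.1 \ u.1) by rw [card_sdiff, v.2]; omega)
  have hBu : Disjoint u.1 B := disjoint_sdiff.mono_right hB
  obtain ⟨u', hA, hC⟩ := exists_vertex_between (A := u.1 ∩ v.1 ∪ B) (C := u.1 ∪ B)
    (union_subset_union inter_subset_left subset_rfl)
    ((card_union_le _ _).trans (by omega)) (by rw [card_union_of_disjoint hBu, u.2]; omega)
  refine ⟨u', ?_, ?_⟩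
  · calc #(u.1 ∪ u'.1) ≤ #(u.1 ∪ B) := card_le_card (union_subset subset_union_left hC)
      _ ≤ n + k := by rw [card_union_of_disjoint hBu, u.2, hBcard]; omega
  · calc min n (s + k) = #(u.1 ∩ v.1 ∪ B) := by
          rw [card_union_of_disjoint (hBu.mono_left inter_subset_left), hBcard]; omega
      _ ≤ #(u'.1 ∩ v.1) :=
          card_le_card (subset_inter hA (union_subset inter_subset_right (hB.trans sdiff_subset)))

theorem exists_walk_length_le_two_mul (hn : 0 < n) (t : ℕ) {u v : Vertex n k}
    (h : n ≤ #(u.1 ∩ v.1) + t * k) :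
    ∃ p : (KneserGraph (2 * n + k) n).Walk u v, p.length ≤ 2 * t := by
  induction t generalizing u with
  | zero =>
    obtain rfl := eq_of_le_card_inter (by simpa using h)
    exact ⟨.nil, by simp⟩
  | succ t ih =>
    obtain ⟨u', hunion, hinter⟩ := exists_card_union_le_and_le_card_inter u v
    obtain ⟨w, huw, hwu'⟩ := exists_adj_adj_of_card_union_le hn hunion
    obtain ⟨p, hp⟩ := ih (u := u') (by rw [add_one_mul t k] at h; omega)
    exact ⟨.cons huw (.cons hwu' p), by simp only [Walk.length_cons]; omega⟩

theorem exists_walk_length_le_two_mul_add_one (hn : 0 < n) (t : ℕ) {u v : Vertex n k}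
    (h : #(u.1 ∩ v.1) ≤ t * k) :
    ∃ p : (KneserGraph (2 * n + k) n).Walk u v, p.length ≤ 2 * t + 1 := by
  obtain ⟨w, huw, hwv⟩ := exists_vertex_between (C := v.1ᶜ)
    (fun a ha => mem_compl.2 (mem_sdiff.1 ha).2)
    ((card_le_card sdiff_subset).trans u.2.le) (by rw [card_compl]; omega)
  have hsdiff : #(u.1 \ v.1) = n - #(u.1 ∩ v.1) := by rw [card_sdiff, u.2, inter_comm]
  have hinter : #(u.1 \ v.1) ≤ #(u.1 ∩ w.1) := card_le_card (subset_inter sdiff_subset huw)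
  obtain ⟨p, hp⟩ := exists_walk_length_le_two_mul hn t (u := u) (v := w) (by omega)
  exact ⟨p.concat (adj_of_disjoint hn (disjoint_compl_left.mono_left hwv)),
    by rw [Walk.length_concat]; omega⟩

/-- Along an edge `x ~ w`, the sets `x ∩ y` and `w ∩ y` are disjoint and miss at most `k`
elements of `y`, so each step of a walk trades one of the two bounds for the other. -/
theorem card_inter_bounds_of_walk {x y : Vertex n k} (p : (KneserGraph (2 * n + k) n).Walk x y) :
    (∀ t, p.length = 2 * t → n ≤ #(x.1 ∩ y.1) + t * k) ∧
      (∀ t, p.length = 2 * t + 1 → #(x.1 ∩ y.1) ≤ t * k) := by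
  induction p with
  | @nil x =>
    refine ⟨fun t _ => ?_, fun t ht => ?_⟩
    · rw [inter_self, x.2]; omega
    · simp only [Walk.length_nil] at ht; omega
  | @cons x w y hxw q ih =>
    have hle := card_inter_add_card_inter_le_of_disjoint hxw.1 y.1
    have hge := card_le_card_inter_add_card_inter_add_card_compl x.1 w.1 y.1
    rw [y.2] at hle hge
    rw [card_compl_union_of_adj hxw] at hge
    simp only [Walk.length_cons]
    refine ⟨fun t ht => ?_, fun t ht => ?_⟩
    · obtain ⟨t, rfl⟩ : ∃ t', t = t' + 1 := ⟨t - 1, by omega⟩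
      have := ih.2 t (by omega)
      rw [add_one_mul t k]; omega
    · have := ih.1 t (by omega)
      omega

theorem connected (hn : 0 < n) (hk : 0 < k) : (KneserGraph (2 * n + k) n).Connected := by
  refine (connected_iff _).2 ⟨fun u v => ?_, inferInstance⟩
  have hs : #(u.1 ∩ v.1) ≤ n * k :=
    (u.2 ▸ card_le_card inter_subset_left).trans (Nat.le_mul_of_pos_right n hk)
  exact (exists_walk_length_le_two_mul_add_one hn n hs).elim fun p _ => ⟨p⟩

theorem le_dist_iff (hn : 0 < n) (hk : 0 < k) (u v : Vertex n k) (d : ℕ) :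
    d ≤ (KneserGraph (2 * n + k) n).dist u v ↔
      ∀ t, (n ≤ #(u.1 ∩ v.1) + t * k → d ≤ 2 * t) ∧ (#(u.1 ∩ v.1) ≤ t * k → d ≤ 2 * t + 1) := by
  refine ⟨fun hd t => ⟨fun h => ?_, fun h => ?_⟩, fun H => ?_⟩
  · obtain ⟨p, hp⟩ := exists_walk_length_le_two_mul hn t h
    exact hd.trans ((dist_le p).trans hp)
  · obtain ⟨p, hp⟩ := exists_walk_length_le_two_mul_add_one hn t h
    exact hd.trans ((dist_le p).trans hp)
  · obtain ⟨p, hp⟩ := (connected hn hk).exists_walk_length_eq_dist u v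
    obtain ⟨heven, hodd⟩ := card_inter_bounds_of_walk p
    rw [← hp]
    obtain ⟨t, ht | ht⟩ := Nat.even_or_odd' p.length
    · exact ht ▸ (H t).1 (heven t ht)
    · exact ht ▸ (H t).2 (hodd t ht)

theorem ceilDiv_add_one_le_diam (hn : 0 < n) (hk : 0 < k) :
    (n - 1) ⌈/⌉ k + 1 ≤ (KneserGraph (2 * n + k) n).diam := by
  set r := (n - 1) ⌈/⌉ k
  have hr (x : ℕ) : r ≤ x ↔ n - 1 ≤ k * x := ceilDiv_le_iff_le_mul hk
  have hj : r / 2 * k ≤ n - 1 := by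
    rcases Nat.eq_zero_or_pos r with h0 | hpos
    · simp [h0]
    · have := (hr (r - 1)).not.1 (by omega)
      calc r / 2 * k ≤ (r - 1) * k := Nat.mul_le_mul_right _ (by omega)
        _ ≤ n - 1 := by rw [mul_comm]; omega
  obtain ⟨u⟩ : Nonempty (Vertex n k) := inferInstance
  obtain ⟨v, hv⟩ := exists_card_inter_eq u (t := n - 1 - r / 2 * k) (by omega)
  refine le_trans ?_ (dist_le_diam (u := u) (v := v)
    (connected_iff_ediam_ne_top.1 (connected hn hk)))
  rw [le_dist_iff hn hk, hv]
  refine fun t => ⟨fun h => ?_, fun h => ?_⟩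
  · have := Nat.lt_of_mul_lt_mul_right (a := k) (b := r / 2) (c := t) (by omega)
    omega
  · have := (hr (t + r / 2)).2 (by rw [mul_add, mul_comm k, mul_comm k]; omega)
    omega

end KneserGraph

theorem intersection_bounds_of_dist_eq_diam_general
    (n k : ℕ) (hn : 0 < n) (hk : 0 < k)
    (u v : {s : Finset (Fin (2 * n + k)) // s.card = n})
    (s : ℕ) (hs : s = (u.1 ∩ v.1).card)
    (h : (KneserGraph (2 * n + k) n).dist u v = (KneserGraph (2 * n + k) n).diam) :
    pInt n k ≤ (s : ℤ) ∧ (s : ℤ) ≤ pInt n k + (Hfun n k : ℤ) := by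
  set r := (n - 1) ⌈/⌉ k
  have hbounds := (KneserGraph.le_dist_iff hn hk u v (r + 1)).1
    (h ▸ KneserGraph.ceilDiv_add_one_le_diam hn hk)
  rw [← hs] at hbounds
  have hupper : s + r / 2 * k < n := by
    by_contra! hle
    have := (hbounds (r / 2)).1 hle
    omega
  set i := r ⌈/⌉ 2
  have hi : i = (r + 1) / 2 := Nat.ceilDiv_eq_add_pred_div r 2
  have hlower : i * k < s + k := by
    by_contra! hle
    have hi0 : 0 < i := Nat.pos_of_ne_zero fun h0 => by rw [h0, zero_mul] at hle; omega
    have := (hbounds (i - 1)).2 (by rw [Nat.sub_one_mul i k]; omega)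
    omega
  have hH := Hfun_add_mul_ceilDiv (k := k) hn
  have hr : k * r = k * i + k * (r / 2) := by rw [← mul_add]; congr 1; omega
  rw [pInt_eq_ceilDiv hn hk]
  zify [show 2 ≤ n + k by omega] at hH hr hupper hlower
  constructor <;> linarith

theorem intersection_bounds_of_dist_eq_diam
    (n k : ℕ) (hn : 0 < n) (hk : 0 < k)
    (u v : {s : Finset (Fin (2 * n + k)) // s.card = n}) (huv : u ≠ v)
    (s : ℕ) (hs : s = (u.1 ∩ v.1).card)
    (h : (KneserGraph (2 * n + k) n).dist u v = (KneserGraph (2 * n + k) n).diam) :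
    pInt n k ≤ (s : ℤ) ∧ (s : ℤ) ≤ pInt n k + (Hfun n k : ℤ) :=
  intersection_bounds_of_dist_eq_diam_general n k hn hk u v s hs h
end

section
/- Let n ≥ 2 and k be positive integers with k ≥ n-1 and k ≤ 2. Then the geodetic hull number of the Kneser graph K(2n+k,n) equals 3. -/
/-!
When `3n ≤ m + 1`, two distinct intersecting vertices of `K(m, n)` are at distance 2, so the
interval between them consists of the two vertices and their common neighbours, the `n`-sets
disjoint from their union. A set of vertices is therefore g-convex iff it contains every common
neighbour of any two distinct intersecting members.

If moreover `m ≤ 2n + 2`, every pair `u, v` lies in a proper g-convex set: `{u, v}` itself when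
`u` and `v` are disjoint, the `n`-sets inside `u ∪ v` or inside its complement when
`|u ∪ v| = n + 1`, and `{u, v, (u ∪ v)ᶜ}` otherwise (then `(u ∪ v)ᶜ` has exactly `n` elements).
So no two vertices form a hull set. Conversely, three `n`-sets through a common `(n - 1)`-set
generate the whole graph after three closure steps; for the three graphs allowed by the
hypotheses this is a finite computation.
-/

section GeodeticHull

variable {V : Type*} {G : SimpleGraph V} {C W : Set V}

lemma isGConvex_iff : IsGConvex G C ↔ ∀ u ∈ C, ∀ v ∈ C, geodInterval G u v ⊆ C := by
  refine ⟨fun h u hu v hv w hw => h ▸ Set.mem_biUnion hu (Set.mem_biUnion hv hw), fun h => ?_⟩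
  refine (Set.iUnion₂_subset fun u hu => Set.iUnion₂_subset fun v hv => h u hu v hv).antisymm
    fun u hu => Set.mem_biUnion hu (Set.mem_biUnion hu ?_)
  simp [geodInterval]

lemma subset_geodHull : W ⊆ geodHull G W := fun _ hx _ hC => hC.2 hx

lemma geodHull_subset (hC : IsGConvex G C) (hWC : W ⊆ C) : geodHull G W ⊆ C :=
  Set.sInter_subset_of_mem ⟨hC, hWC⟩

lemma isGConvex_geodHull : IsGConvex G (geodHull G W) :=
  isGConvex_iff.mpr fun _ hu _ hv _ hw C hC =>
    isGConvex_iff.mp hC.1 _ (hu C hC) _ (hv C hC) hw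

lemma geodHull_mono {W' : Set V} (h : W ⊆ W') : geodHull G W ⊆ geodHull G W' :=
  geodHull_subset isGConvex_geodHull (h.trans subset_geodHull)

lemma geodHull_ne_univ (hC : IsGConvex G C) (hWC : W ⊆ C) (hCne : C ≠ Set.univ) :
    geodHull G W ≠ Set.univ :=
  fun h => hCne (Set.eq_univ_of_univ_subset (h ▸ geodHull_subset hC hWC))

lemma geodHullNumber_le (hW : IsGeodHullSet G W) : geodHullNumber G ≤ W.ncard :=
  Nat.sInf_le ⟨W, hW, rfl⟩

lemma three_le_geodHullNumber [Finite V] [Nonempty V]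
    (h : ∀ u v : V, geodHull G {u, v} ≠ Set.univ) : 3 ≤ geodHullNumber G := by
  have huniv : IsGeodHullSet G Set.univ := Set.eq_univ_of_univ_subset subset_geodHull
  refine le_csInf ⟨_, Set.univ, huniv, rfl⟩ ?_
  rintro _ ⟨W, hW, rfl⟩
  by_contra! hW2
  obtain ⟨u, v, hWuv⟩ : ∃ u v : V, W ⊆ {u, v} := by
    interval_cases hc : W.ncard
    · obtain ⟨u⟩ := ‹Nonempty V›
      exact ⟨u, u, by simp [(Set.ncard_eq_zero W.toFinite).mp hc]⟩
    · obtain ⟨u, rfl⟩ := Set.ncard_eq_one.mp hc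
      exact ⟨u, u, by simp⟩
    · obtain ⟨u, v, -, rfl⟩ := Set.ncard_eq_two.mp hc
      exact ⟨u, v, subset_rfl⟩
  exact h u v (Set.eq_univ_of_univ_subset (hW ▸ geodHull_mono hWuv))

end GeodeticHull

abbrev KneserVertex (m n : ℕ) := {s : Finset (Fin m) // s.card = n}

namespace KneserGraph

variable {m n : ℕ} {u v w : KneserVertex m n}

lemma adj_iff (hn : 1 ≤ n) : (KneserGraph m n).Adj u v ↔ Disjoint u.1 v.1 := by
  refine ⟨And.left, fun h => ⟨h, ?_⟩⟩
  rintro rfl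
  have : u.1.Nonempty := by rw [← Finset.card_pos, u.2]; omega
  exact this.ne_empty (disjoint_self.mp h)

lemma exists_disjoint_of_not_disjoint (hm : 3 * n ≤ m + 1) (h : ¬Disjoint u.1 v.1) :
    ∃ w : KneserVertex m n, Disjoint u.1 w.1 ∧ Disjoint w.1 v.1 := by
  have hinter : 1 ≤ (u.1 ∩ v.1).card :=
    Finset.card_pos.mpr (Finset.not_disjoint_iff_nonempty_inter.mp h)
  have hunion := Finset.card_union_add_card_inter u.1 v.1
  rw [u.2, v.2] at hunion
  have hcompl : n ≤ (u.1 ∪ v.1)ᶜ.card := by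
    rw [Finset.card_compl, Fintype.card_fin]; omega
  obtain ⟨w, hw, hwcard⟩ := Finset.exists_subset_card_eq hcompl
  obtain ⟨huw, hvw⟩ := Finset.disjoint_union_left.mp
    (Finset.disjoint_of_subset_right hw disjoint_compl_right)
  exact ⟨⟨w, hwcard⟩, huw, hvw.symm⟩

lemma nonempty_vertex (h : n ≤ m) : Nonempty (KneserVertex m n) :=
  have ⟨s, _, hs⟩ := Finset.exists_subset_card_eq (s := (.univ : Finset (Fin m))) (by simpa)
  ⟨⟨s, hs⟩⟩

lemma four_le_card (hn : 2 ≤ n) (hm : n + 2 ≤ m) : 4 ≤ Nat.card (KneserVertex m n) := by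
  rw [Nat.card_eq_fintype_card, Fintype.card_finset_len, Fintype.card_fin]
  calc 4 ≤ (n + 2).choose 2 := by
        rw [Nat.choose_two_right, show n + 2 - 1 = n + 1 by omega]
        exact (Nat.le_div_iff_mul_le two_pos).mpr (by nlinarith)
    _ = (n + 2).choose n := Nat.choose_symm_add.symm
    _ ≤ m.choose n := Nat.choose_le_choose n hm

lemma ne_univ_of_ncard_le_three (hn : 2 ≤ n) (hm : n + 2 ≤ m) {S : Set (KneserVertex m n)}
    (hS : S.ncard ≤ 3) : S ≠ .univ := by
  rintro rfl
  have := four_le_card hn hm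
  rw [Set.ncard_univ] at hS
  omega

lemma card_lt_card_union {a b : KneserVertex m n} (hab : a ≠ b) : n < (a.1 ∪ b.1).card := by
  have hba : ¬b.1 ⊆ a.1 := fun hba =>
    hab (Subtype.ext (Finset.eq_of_subset_of_card_le hba (by rw [a.2, b.2])).symm)
  have hlt : a.1.card < (a.1 ∪ b.1).card := Finset.card_lt_card
    (Finset.ssubset_iff_subset_ne.mpr
      ⟨Finset.subset_union_left, fun h => hba (h ▸ Finset.subset_union_right)⟩)
  rwa [a.2] at hlt

lemma union_eq_of_subset {A : Finset (Fin m)} {a b : KneserVertex m n} (hab : a ≠ b)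
    (ha : a.1 ⊆ A) (hb : b.1 ⊆ A) (hA : A.card ≤ n + 1) : a.1 ∪ b.1 = A :=
  Finset.eq_of_subset_of_card_le (Finset.union_subset ha hb)
    (by have := card_lt_card_union hab; omega)

lemma subset_compl_of_disjoint_of_disjoint {A : Finset (Fin m)} {a b : KneserVertex m n}
    (hab : a ≠ b) (ha : a.1 ⊆ A) (hb : b.1 ⊆ A) (hA : A.card ≤ n + 1)
    (haw : Disjoint a.1 w.1) (hwb : Disjoint w.1 b.1) : w.1 ⊆ Aᶜ := by
  rw [Finset.subset_compl_iff_disjoint_right, ← union_eq_of_subset hab ha hb hA]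
  exact Finset.disjoint_union_right.mpr ⟨haw.symm, hwb⟩

lemma setOf_subset_or_subset_compl_ne_univ (hn : 2 ≤ n) (hnm : n ≤ m) {A : Finset (Fin m)}
    (hA : A.Nonempty) (hAc : Aᶜ.Nonempty) :
    {w : KneserVertex m n | w.1 ⊆ A ∨ w.1 ⊆ Aᶜ} ≠ .univ := by
  obtain ⟨x, hx⟩ := hA
  obtain ⟨y, hy⟩ := hAc
  have hxy : x ≠ y := by rintro rfl; exact Finset.mem_compl.mp hy hx
  obtain ⟨t, hxyt, ht⟩ := Finset.exists_superset_card_eq (s := {x, y}) (n := n)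
    (by rw [Finset.card_pair hxy]; omega) (by simpa using hnm)
  intro h
  rcases h.symm ▸ Set.mem_univ (⟨t, ht⟩ : KneserVertex m n) with htA | htA
  · exact Finset.mem_compl.mp hy (htA (hxyt (by simp)))
  · exact Finset.mem_compl.mp (htA (hxyt (by simp))) hx

def hullStep (S : Finset (KneserVertex m n)) : Finset (KneserVertex m n) :=
  S ∪ Finset.univ.filter fun w => ∃ a ∈ S, ∃ b ∈ S,
    a ≠ b ∧ ¬Disjoint a.1 b.1 ∧ Disjoint a.1 w.1 ∧ Disjoint w.1 b.1

section Diameter2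

variable (hn : 1 ≤ n) (hm : 3 * n ≤ m + 1)
include hn hm

lemma dist_eq :
    (KneserGraph m n).dist u v = if u = v then 0 else if Disjoint u.1 v.1 then 1 else 2 := by
  split_ifs with huv hd
  · exact huv ▸ SimpleGraph.dist_self
  · exact SimpleGraph.dist_eq_one_iff_adj.mpr ((adj_iff hn).mpr hd)
  · obtain ⟨w, huw, hwv⟩ := exists_disjoint_of_not_disjoint hm hd
    have huw' := (adj_iff hn).mpr huw
    have hwv' := (adj_iff hn).mpr hwv
    have hle : (KneserGraph m n).dist u v ≤ 2 := by
      simpa using SimpleGraph.dist_le (.cons huw' (.cons hwv' .nil))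
    have h0 : (KneserGraph m n).dist u v ≠ 0 := fun h0 =>
      huv ((huw'.reachable.trans hwv'.reachable).dist_eq_zero_iff.mp h0)
    have h1 : (KneserGraph m n).dist u v ≠ 1 := fun h1 =>
      hd ((adj_iff hn).mp (SimpleGraph.dist_eq_one_iff_adj.mp h1))
    omega

lemma mem_geodInterval_iff :
    w ∈ geodInterval (KneserGraph m n) u v ↔
      w = u ∨ w = v ∨ (u ≠ v ∧ ¬Disjoint u.1 v.1 ∧ Disjoint u.1 w.1 ∧ Disjoint w.1 v.1) := by
  simp only [geodInterval, Set.mem_ofPred_eq, dist_eq hn hm]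
  by_cases hwu : w = u
  · subst hwu; split_ifs <;> simp_all
  by_cases hwv : w = v
  · subst hwv; split_ifs <;> simp_all
  split_ifs <;> simp_all

lemma isGConvex_iff_forall_disjoint {C : Set (KneserVertex m n)} :
    IsGConvex (KneserGraph m n) C ↔ ∀ a ∈ C, ∀ b ∈ C, ∀ w : KneserVertex m n,
      a ≠ b → ¬Disjoint a.1 b.1 → Disjoint a.1 w.1 → Disjoint w.1 b.1 → w ∈ C := by
  rw [isGConvex_iff]
  refine ⟨fun h a ha b hb w hab hd haw hwb =>
    h a ha b hb ((mem_geodInterval_iff hn hm).mpr (Or.inr (Or.inr ⟨hab, hd, haw, hwb⟩))),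
    fun h a ha b hb w hw => ?_⟩
  rcases (mem_geodInterval_iff hn hm).mp hw with rfl | rfl | ⟨hab, hd, haw, hwb⟩
  exacts [ha, hb, h a ha b hb w hab hd haw hwb]

lemma isGConvex_pair_of_eq_or_disjoint (h : u = v ∨ Disjoint u.1 v.1) :
    IsGConvex (KneserGraph m n) {u, v} := by
  refine (isGConvex_iff_forall_disjoint hn hm).mpr ?_
  rintro a ha b hb w hab hd -
  simp only [Set.mem_insert_iff, Set.mem_singleton_iff] at ha hb
  rcases ha with rfl | rfl <;> rcases hb with rfl | rfl <;> rcases h with h | h <;>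
    simp_all [disjoint_comm]

lemma isGConvex_setOf_subset_or_subset_compl {A : Finset (Fin m)} (hA : A.card ≤ n + 1)
    (hAc : Aᶜ.card ≤ n + 1) : IsGConvex (KneserGraph m n) {w | w.1 ⊆ A ∨ w.1 ⊆ Aᶜ} := by
  refine (isGConvex_iff_forall_disjoint hn hm).mpr ?_
  rintro a (ha | ha) b (hb | hb) w hab hd haw hwb
  · exact Or.inr (subset_compl_of_disjoint_of_disjoint hab ha hb hA haw hwb)
  · exact absurd (Finset.disjoint_of_subset_left ha
      (Finset.subset_compl_iff_disjoint_right.mp hb).symm) hd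
  · exact absurd (Finset.disjoint_of_subset_right hb
      (Finset.subset_compl_iff_disjoint_right.mp ha)) hd
  · exact Or.inl (compl_compl A ▸ subset_compl_of_disjoint_of_disjoint hab ha hb hAc haw hwb)

lemma isGConvex_triple_compl_union (hc : (u.1 ∪ v.1)ᶜ.card = n) :
    IsGConvex (KneserGraph m n) {u, v, ⟨(u.1 ∪ v.1)ᶜ, hc⟩} := by
  have hcu : Disjoint u.1 (u.1 ∪ v.1)ᶜ :=
    Finset.disjoint_of_subset_left Finset.subset_union_left disjoint_compl_right
  have hcv : Disjoint v.1 (u.1 ∪ v.1)ᶜ :=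
    Finset.disjoint_of_subset_left Finset.subset_union_right disjoint_compl_right
  have hcommon : ∀ w : KneserVertex m n, Disjoint (u.1 ∪ v.1) w.1 → w = ⟨(u.1 ∪ v.1)ᶜ, hc⟩ :=
    fun w hw => Subtype.ext (Finset.eq_of_subset_of_card_le
      (Finset.subset_compl_iff_disjoint_right.mpr hw.symm) (by rw [hc, w.2]))
  refine (isGConvex_iff_forall_disjoint hn hm).mpr ?_
  rintro a ha b hb w hab hd haw hwb
  simp only [Set.mem_insert_iff, Set.mem_singleton_iff] at ha hb
  rcases ha with rfl | rfl | rfl <;> rcases hb with rfl | rfl | rfl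
  all_goals first
    | exact absurd rfl hab
    | exact absurd hcu hd | exact absurd hcu.symm hd
    | exact absurd hcv hd | exact absurd hcv.symm hd
    | simp [hcommon w (Finset.disjoint_union_left.mpr ⟨haw, hwb.symm⟩)]
    | simp [hcommon w (Finset.disjoint_union_left.mpr ⟨hwb.symm, haw⟩)]

lemma hullStep_subset {C : Set (KneserVertex m n)} (hC : IsGConvex (KneserGraph m n) C)
    {S : Finset (KneserVertex m n)} (hS : ↑S ⊆ C) : ↑(hullStep S) ⊆ C := by
  intro w hw
  simp only [hullStep, Finset.coe_union, Finset.coe_filter, Finset.mem_univ, true_and] at hw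
  rcases hw with hw | ⟨a, ha, b, hb, hab, hd, haw, hwb⟩
  · exact hS hw
  · exact (isGConvex_iff_forall_disjoint hn hm).mp hC a (hS ha) b (hS hb) w hab hd haw hwb

lemma isGeodHullSet_of_hullStep_iterate_eq_univ {S : Finset (KneserVertex m n)} {k : ℕ}
    (h : hullStep^[k] S = .univ) : IsGeodHullSet (KneserGraph m n) ↑S := by
  have hsub : ∀ j, ↑(hullStep^[j] S) ⊆ geodHull (KneserGraph m n) ↑S := by
    intro j
    induction j with
    | zero => exact subset_geodHull
    | succ j ih =>
      rw [Function.iterate_succ_apply']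
      exact hullStep_subset hn hm isGConvex_geodHull ih
  exact Set.eq_univ_of_univ_subset (by simpa [h] using hsub k)

lemma geodHullNumber_le_card {S : Finset (KneserVertex m n)} {k : ℕ}
    (h : hullStep^[k] S = .univ) : geodHullNumber (KneserGraph m n) ≤ S.card :=
  Set.ncard_coe_finset S ▸ geodHullNumber_le (isGeodHullSet_of_hullStep_iterate_eq_univ hn hm h)

end Diameter2

lemma exists_isGConvex_pair_subset_ne_univ (hn : 2 ≤ n) (hm : 3 * n ≤ m + 1)
    (hm' : m ≤ 2 * n + 2) (u v : KneserVertex m n) :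
    ∃ C, IsGConvex (KneserGraph m n) C ∧ {u, v} ⊆ C ∧ C ≠ .univ := by
  have hsmall (S : Set (KneserVertex m n)) : S.ncard ≤ 3 → S ≠ .univ :=
    ne_univ_of_ncard_le_three hn (by omega)
  have hunion := Finset.card_union_add_card_inter u.1 v.1
  have hcompl := Finset.card_compl (u.1 ∪ v.1)
  rw [u.2, v.2] at hunion
  rw [Fintype.card_fin] at hcompl
  by_cases huv : u = v ∨ Disjoint u.1 v.1
  · refine ⟨{u, v}, isGConvex_pair_of_eq_or_disjoint (by omega) hm huv, subset_rfl, hsmall _ ?_⟩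
    exact (Set.ncard_insert_le _ _).trans (by simp)
  push Not at huv
  have hinter : 1 ≤ (u.1 ∩ v.1).card :=
    Finset.card_pos.mpr (Finset.not_disjoint_iff_nonempty_inter.mp huv.2)
  have hA' := card_lt_card_union huv.1
  by_cases hA : (u.1 ∪ v.1).card ≤ n + 1
  · refine ⟨_, isGConvex_setOf_subset_or_subset_compl (by omega) hm hA (by omega), ?_,
      setOf_subset_or_subset_compl_ne_univ hn (by omega) ?_ ?_⟩
    · exact Set.insert_subset (Or.inl Finset.subset_union_left)
        (Set.singleton_subset_iff.mpr (Or.inl Finset.subset_union_right))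
    · exact Finset.card_pos.mp (by omega)
    · exact Finset.card_pos.mp (by omega)
  · have hc : (u.1 ∪ v.1)ᶜ.card = n := by omega
    refine ⟨_, isGConvex_triple_compl_union (by omega) hm hc, by simp [Set.insert_subset_iff],
      hsmall _ ?_⟩
    exact (Set.ncard_insert_le _ _).trans
      (Nat.succ_le_succ ((Set.ncard_insert_le _ _).trans (by simp)))

lemma geodHull_pair_ne_univ (hn : 2 ≤ n) (hm : 3 * n ≤ m + 1) (hm' : m ≤ 2 * n + 2)
    (u v : KneserVertex m n) : geodHull (KneserGraph m n) {u, v} ≠ .univ :=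
  have ⟨_, hC, huvC, hCne⟩ := exists_isGConvex_pair_subset_ne_univ hn hm hm' u v
  geodHull_ne_univ hC huvC hCne

end KneserGraph

theorem geodHullNumber_eq_three_general
    (n k : ℕ) (hn : 2 ≤ n) (hkn : n - 1 ≤ k) (hk2 : k ≤ 2) :
    geodHullNumber (KneserGraph (2 * n + k) n) = 3 := by
  refine le_antisymm ?_ ?_
  · obtain ⟨rfl, rfl⟩ | ⟨rfl, rfl⟩ | ⟨rfl, rfl⟩ :
        (n = 2 ∧ k = 1) ∨ (n = 2 ∧ k = 2) ∨ (n = 3 ∧ k = 2) := by omega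
    · exact (KneserGraph.geodHullNumber_le_card (m := 2 * 2 + 1) (n := 2) (by norm_num)
        (by norm_num) (S := {⟨{0, 1}, rfl⟩, ⟨{0, 2}, rfl⟩, ⟨{0, 3}, rfl⟩}) (k := 3)
        (by decide)).trans_eq rfl
    · exact (KneserGraph.geodHullNumber_le_card (m := 2 * 2 + 2) (n := 2) (by norm_num)
        (by norm_num) (S := {⟨{0, 1}, rfl⟩, ⟨{0, 2}, rfl⟩, ⟨{0, 3}, rfl⟩}) (k := 3)
        (by decide)).trans_eq rfl
    · exact (KneserGraph.geodHullNumber_le_card (m := 2 * 3 + 2) (n := 3) (by norm_num)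
        (by norm_num) (S := {⟨{0, 1, 2}, rfl⟩, ⟨{0, 1, 3}, rfl⟩, ⟨{0, 1, 4}, rfl⟩}) (k := 3)
        (by set_option maxRecDepth 4000 in decide)).trans_eq rfl
  · have := KneserGraph.nonempty_vertex (by omega : n ≤ 2 * n + k)
    exact three_le_geodHullNumber (KneserGraph.geodHull_pair_ne_univ hn (by omega) (by omega))

theorem geodHullNumber_eq_three
    (n k : ℕ) (hn : 2 ≤ n) (hk : 0 < k) (hkn : n - 1 ≤ k) (hk2 : k ≤ 2) :
    geodHullNumber (KneserGraph (2 * n + k) n) = 3 :=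
  geodHullNumber_eq_three_general n k hn hkn hk2
end
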